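/- Let P be a finite poset with gap(P) = c(P) + |P| - (max(P) + min(P) + edges(P)). Then gap(P) = 0 if and only if every element v of P has crossing number (uc(v)-1)(dc(v)-1) equal to zero. -/

import Mathlib

open Classical

variable {α : Type*}

/-- A saturated chain from `v` up to a maximal element: a list `v = v₀ ⋖ v₁ ⋖ … ⋖ vₖ`
with `vₖ` maximal. -/
def UpChain [PartialOrder α] (v : α) (l : List α) : Prop :=
  l.Chain' (· ⋖ ·) ∧ l.head? = some v ∧ ∃ m, l.getLast? = some m ∧ IsMax m

/-- A saturated chain from a minimal element up to `v`. -/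
def DownChain [PartialOrder α] (v : α) (l : List α) : Prop :=
  l.Chain' (· ⋖ ·) ∧ (∃ m, l.head? = some m ∧ IsMin m) ∧ l.getLast? = some v

/-- `uc v` : the number of saturated chains from `v` up to a maximal element. -/
noncomputable def uc [PartialOrder α] (v : α) : ℕ := Nat.card {l : List α // UpChain v l}

/-- `dc v` : the number of saturated chains from `v` down to a minimal element. -/
noncomputable def dc [PartialOrder α] (v : α) : ℕ := Nat.card {l : List α // DownChain v l}

/-- A maximal chain: a saturated chain from a minimal element to a maximal element. -/
def IsMaxChainList [PartialOrder α] (l : List α) : Prop :=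
  l.Chain' (· ⋖ ·) ∧ (∃ m, l.head? = some m ∧ IsMin m) ∧ ∃ m, l.getLast? = some m ∧ IsMax m

/-- `c(P)`: the number of maximal chains. -/
noncomputable def numMaxChains (α : Type*) [PartialOrder α] : ℕ :=
  Nat.card {l : List α // IsMaxChainList l}

/-- `max(P)`: the number of maximal elements. -/
noncomputable def numMax (α : Type*) [PartialOrder α] : ℕ := Nat.card {v : α // IsMax v}

/-- `min(P)`: the number of minimal elements. -/
noncomputable def numMin (α : Type*) [PartialOrder α] : ℕ := Nat.card {v : α // IsMin v}

/-- `edges(P)`: the number of cover relations (edges of the Hasse diagram). -/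
noncomputable def numEdges (α : Type*) [PartialOrder α] : ℕ :=
  Nat.card {p : α × α // p.1 ⋖ p.2}

/-- `gap(P) = c(P) + |P| - (max(P) + min(P) + edges(P))`. -/
noncomputable def gap (α : Type*) [PartialOrder α] : ℤ :=
  (numMaxChains α : ℤ) + Nat.card α - ((numMax α : ℤ) + numMin α + numEdges α)

/-- The crossing number `(uc(v)-1)(dc(v)-1)` of `v`. -/
noncomputable def crossingNumber [PartialOrder α] (v : α) : ℕ := (uc v - 1) * (dc v - 1)

/-- `c` is the center of an X-shaped subposet: there are `a, b < c < d, e`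
with `a ∥ b` and `d ∥ e`. -/
def IsXCenter [PartialOrder α] (c : α) : Prop :=
  ∃ a b d e : α, a < c ∧ b < c ∧ c < d ∧ c < e ∧
    ¬ a ≤ b ∧ ¬ b ≤ a ∧ ¬ d ≤ e ∧ ¬ e ≤ d

/-- `P` contains an X-shaped subposet. -/
def HasX (α : Type*) [PartialOrder α] : Prop := ∃ c : α, IsXCenter c

/-!
Counting maximal chains by their top element, and cover pairs `u ⋖ w` weighted by `dc u` by their
upper end (where `dc w = ∑_{u ⋖ w} dc u`), gives `gap P = ∑_{v not maximal} (od v - 1) (dc v - 1)`,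
with `od v` the number of upper covers of `v`. The terms are nonnegative, so `gap P = 0` iff every
non-maximal `v` has a unique upper cover or `dc v = 1`. That is equivalent to `uc v = 1 ∨ dc v = 1`
for all `v`: a unique upper cover `w` gives `uc v = uc w`, and `dc` grows along covers, so
`dc v ≠ 1` propagates up to a maximal element, where `uc = 1`.
-/

open Finset

section PartialOrder
variable [PartialOrder α]

theorem finite_of_isChain_covBy [Finite α] {p : List α → Prop}
    (h : ∀ l, p l → l.IsChain (· ⋖ ·)) : Finite {l : List α // p l} :=
  Finite.of_injective (fun l : {l // p l} => {a | a ∈ l.1}) fun l₁ l₂ hl =>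
    Subtype.ext <| List.Pairwise.eq_of_mem_iff (r := (· < ·))
      (List.isChain_iff_pairwise.mp ((h _ l₁.2).imp fun _ _ hc => hc.lt))
      (List.isChain_iff_pairwise.mp ((h _ l₂.2).imp fun _ _ hc => hc.lt))
      (Set.ext_iff.mp hl)

instance [Finite α] (v : α) : Finite {l : List α // UpChain v l} :=
  finite_of_isChain_covBy fun _ h => h.1

instance [Finite α] (v : α) : Finite {l : List α // DownChain v l} :=
  finite_of_isChain_covBy fun _ h => h.1

variable {v w : α} {l t : List α}

theorem upChain_singleton (h : IsMax v) : UpChain v [v] :=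
  ⟨List.isChain_singleton v, rfl, v, rfl, h⟩

theorem UpChain.eq_singleton (hl : UpChain v l) (h : IsMax v) : l = [v] := by
  obtain ⟨hc, hh, -⟩ := hl
  match l, hh with
  | [_], rfl => rfl
  | _ :: w :: _, rfl => exact absurd (List.isChain_cons_cons.mp hc).1.lt h.not_lt

theorem UpChain.cons (hvw : v ⋖ w) (ht : UpChain w t) : UpChain v (v :: t) := by
  obtain ⟨hc, hh, m, hlast, hm⟩ := ht
  match t, hh with
  | _ :: _, rfl => exact ⟨List.IsChain.cons_cons hvw hc, rfl, m, by simpa using hlast, hm⟩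

theorem UpChain.exists_cons (hl : UpChain v l) (hv : ¬IsMax v) :
    ∃ w t, v ⋖ w ∧ UpChain w t ∧ l = v :: t := by
  obtain ⟨hc, hh, m, hlast, hm⟩ := hl
  match l, hh with
  | [_], rfl =>
    obtain rfl : _ = m := by simpa using hlast
    exact absurd hm hv
  | _ :: w :: t, rfl =>
    obtain ⟨hvw, hc⟩ := List.isChain_cons_cons.mp hc
    exact ⟨w, w :: t, hvw, ⟨hc, rfl, m, by simpa using hlast, hm⟩, rfl⟩

theorem uc_of_isMax (h : IsMax v) : uc v = 1 :=
  Nat.card_eq_one_iff_exists.mpr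
    ⟨⟨[v], upChain_singleton h⟩, fun l => Subtype.ext (l.2.eq_singleton h)⟩

noncomputable def upChainSigmaEquiv (hv : ¬IsMax v) :
    (Σ w : {w // v ⋖ w}, {t : List α // UpChain w.1 t}) ≃ {l : List α // UpChain v l} :=
  Equiv.ofBijective (fun x => ⟨v :: x.2.1, x.2.2.cons x.1.2⟩) <| by
    constructor
    · rintro ⟨⟨w, hw⟩, ⟨t, ht⟩⟩ ⟨⟨w', hw'⟩, ⟨t', ht'⟩⟩ h
      obtain rfl : t = t' := (List.cons.inj (congrArg Subtype.val h)).2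
      obtain rfl : w = w' := Option.some.inj (ht.2.1.symm.trans ht'.2.1)
      rfl
    · rintro ⟨l, hl⟩
      obtain ⟨w, t, hvw, ht, rfl⟩ := hl.exists_cons hv
      exact ⟨⟨⟨w, hvw⟩, ⟨t, ht⟩⟩, rfl⟩

theorem uc_eq_sum [Fintype α] (hv : ¬IsMax v) : uc v = ∑ w with v ⋖ w, uc w := by
  rw [uc, ← Nat.card_congr (upChainSigmaEquiv hv), Nat.card_sigma]
  exact (sum_subtype _ (fun w => by simp) uc).symm

end PartialOrder

section Duality
variable [PartialOrder α]

def List.reverseToDual : List α ≃ List αᵒᵈ where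
  toFun l := l.reverse.map OrderDual.toDual
  invFun l := (l.map OrderDual.ofDual).reverse
  left_inv l := by simp [Function.comp_def]
  right_inv l := by simp [Function.comp_def]

theorem List.isChain_covBy_reverseToDual {l : List α} :
    (List.reverseToDual l).IsChain (· ⋖ ·) ↔ l.IsChain (· ⋖ ·) := by
  simp [List.reverseToDual, List.isChain_map, List.isChain_reverse]

theorem downChain_iff_upChain_reverseToDual {v : α} {l : List α} :
    DownChain v l ↔ UpChain (OrderDual.toDual v) (List.reverseToDual l) := by
  refine and_congr List.isChain_covBy_reverseToDual.symm ?_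
  simp [List.reverseToDual, List.head?_reverse, List.getLast?_reverse, and_comm]

theorem dc_eq_uc_toDual (v : α) : dc v = uc (OrderDual.toDual v) :=
  Nat.card_congr (Equiv.subtypeEquiv _ fun _ => downChain_iff_upChain_reverseToDual)

theorem dc_of_isMin {v : α} (h : IsMin v) : dc v = 1 :=
  dc_eq_uc_toDual v ▸ uc_of_isMax h.toDual

end Duality

section Fintype
variable [Fintype α] [PartialOrder α] {u v : α}

theorem exists_upChain (v : α) : ∃ l, UpChain v l := by
  induction v using WellFoundedGT.induction with
  | _ v ih =>
    by_cases hv : IsMax v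
    · exact ⟨[v], upChain_singleton hv⟩
    · obtain ⟨w, hvw, -⟩ := exists_covBy_le_of_lt (not_isMax_iff.mp hv).choose_spec
      obtain ⟨t, ht⟩ := ih w hvw.lt
      exact ⟨v :: t, ht.cons hvw⟩

theorem one_le_uc (v : α) : 1 ≤ uc v :=
  have := nonempty_subtype.mpr (exists_upChain v)
  Nat.card_pos

theorem one_le_dc (v : α) : 1 ≤ dc v :=
  dc_eq_uc_toDual v ▸ one_le_uc _

theorem dc_eq_sum (hv : ¬IsMin v) : dc v = ∑ u with u ⋖ v, dc u := by
  rw [dc_eq_uc_toDual, uc_eq_sum (by simpa using hv)]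
  exact (sum_equiv OrderDual.toDual (by simp) fun u _ => dc_eq_uc_toDual u).symm

theorem dc_le_dc_of_covBy (h : u ⋖ v) : dc u ≤ dc v := by
  rw [dc_eq_sum fun hv => hv.not_lt h.lt]
  exact single_le_sum (f := dc) (fun _ _ => Nat.zero_le _) (by simpa using h)

noncomputable def maxChainSigmaEquiv :
    (Σ m : {m : α // IsMax m}, {l : List α // DownChain m.1 l}) ≃
      {l : List α // IsMaxChainList l} :=
  Equiv.ofBijective (fun x => ⟨x.2.1, x.2.2.1, x.2.2.2.1, x.1.1, x.2.2.2.2, x.1.2⟩) <| by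
    constructor
    · rintro ⟨⟨m, hm⟩, ⟨l, hl⟩⟩ ⟨⟨m', hm'⟩, ⟨l', hl'⟩⟩ h
      obtain rfl : l = l' := congrArg Subtype.val h
      obtain rfl : m = m' := Option.some.inj (hl.2.2.symm.trans hl'.2.2)
      rfl
    · rintro ⟨l, hc, hmin, m, hlast, hmax⟩
      exact ⟨⟨⟨m, hmax⟩, ⟨l, hc, hmin, hlast⟩⟩, rfl⟩

theorem numMaxChains_eq_sum : numMaxChains α = ∑ m : α with IsMax m, dc m := by
  rw [numMaxChains, ← Nat.card_congr maxChainSigmaEquiv, Nat.card_sigma]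
  exact (sum_subtype _ (fun m => by simp) dc).symm

noncomputable def numUpperCovers (v : α) : ℕ := #{w | v ⋖ w}

theorem numUpperCovers_eq_zero (h : IsMax v) : numUpperCovers v = 0 := by
  simpa [numUpperCovers] using fun w hw => h.not_lt hw.lt

theorem one_le_numUpperCovers (h : ¬IsMax v) : 1 ≤ numUpperCovers v := by
  obtain ⟨w, hvw, -⟩ := exists_covBy_le_of_lt (not_isMax_iff.mp h).choose_spec
  exact card_pos.mpr ⟨w, by simpa using hvw⟩

theorem numUpperCovers_le_uc (h : ¬IsMax v) : numUpperCovers v ≤ uc v := by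
  rw [uc_eq_sum h, numUpperCovers, card_eq_sum_ones]
  exact sum_le_sum fun w _ => one_le_uc w

theorem numEdges_eq_sum : numEdges α = ∑ v : α, numUpperCovers v := by
  rw [numEdges, Nat.card_eq_fintype_card, Fintype.card_subtype, card_filter,
    Fintype.sum_prod_type]
  simp only [numUpperCovers, card_filter]

theorem numMin_eq_sum : numMin α = ∑ v : α with IsMin v, dc v := by
  rw [numMin, Nat.card_eq_fintype_card, Fintype.card_subtype, card_eq_sum_ones]
  exact sum_congr rfl fun v hv => (dc_of_isMin (mem_filter.mp hv).2).symm

theorem numMax_eq_card : numMax α = #{v : α | IsMax v} := by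
  rw [numMax, Nat.card_eq_fintype_card, Fintype.card_subtype]

theorem sum_numUpperCovers_mul_dc_add_numMin :
    ∑ v : α, numUpperCovers v * dc v + numMin α = ∑ v : α, dc v := by
  have hcovers : ∑ v : α, numUpperCovers v * dc v = ∑ w : α with ¬IsMin w, dc w :=
    calc ∑ v : α, numUpperCovers v * dc v
        = ∑ v : α, ∑ w : α, if v ⋖ w then dc v else 0 := by
          simp only [numUpperCovers, card_eq_sum_ones, sum_mul,
            sum_filter, ite_mul, one_mul, zero_mul]
      _ = ∑ w : α, ∑ u : α with u ⋖ w, dc u := by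
          rw [sum_comm]; simp only [sum_filter]
      _ = ∑ w : α with ¬IsMin w, dc w := by
          rw [sum_filter]
          refine sum_congr rfl fun w _ => ?_
          by_cases hw : IsMin w
          · rw [if_neg (not_not.mpr hw), sum_eq_zero]
            exact fun u hu => (hw.not_lt (mem_filter.mp hu).2.lt).elim
          · simp [hw, dc_eq_sum hw]
  rw [hcovers, numMin_eq_sum, sum_filter_not_add_sum_filter]

theorem gap_eq_sum :
    gap α = ∑ v : α with ¬IsMax v, ((numUpperCovers v : ℤ) - 1) * ((dc v : ℤ) - 1) := by
  set f : α → ℤ := fun v => ((numUpperCovers v : ℤ) - 1) * ((dc v : ℤ) - 1)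
  have hmax : ∑ v : α with IsMax v, f v = numMax α - numMaxChains α := by
    rw [numMaxChains_eq_sum, numMax_eq_card, card_eq_sum_ones]
    push_cast
    rw [← sum_sub_distrib]
    refine sum_congr rfl fun v hv => ?_
    simp [f, numUpperCovers_eq_zero (mem_filter.mp hv).2]
  have hall : ∑ v : α, f v = Nat.card α - numMin α - numEdges α := by
    have hcount := congrArg (Nat.cast : ℕ → ℤ) (sum_numUpperCovers_mul_dc_add_numMin (α := α))
    have hf : ∀ v, f v = numUpperCovers v * dc v - numUpperCovers v - dc v + 1 :=
      fun v => by ring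
    rw [numEdges_eq_sum, Nat.card_eq_fintype_card, ← card_univ, card_eq_sum_ones]
    push_cast at hcount ⊢
    simp only [hf, sum_add_distrib, sum_sub_distrib, sum_const,
      card_univ, nsmul_eq_mul, mul_one]
    linarith
  rw [← sum_filter_add_sum_filter_not univ IsMax f] at hall
  rw [gap]
  linarith

theorem crossingNumber_eq_zero_iff (v : α) : crossingNumber v = 0 ↔ uc v = 1 ∨ dc v = 1 := by
  have := one_le_uc v
  have := one_le_dc v
  rw [crossingNumber, Nat.mul_eq_zero]
  omega

theorem gap_eq_zero_iff :
    gap α = 0 ↔ ∀ v : α, ¬IsMax v → numUpperCovers v = 1 ∨ dc v = 1 := by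
  have hpos : ∀ v : α, ¬IsMax v → 1 ≤ (numUpperCovers v : ℤ) ∧ 1 ≤ (dc v : ℤ) := fun v hv =>
    ⟨by exact_mod_cast one_le_numUpperCovers hv, by exact_mod_cast one_le_dc v⟩
  rw [gap_eq_sum, sum_eq_zero_iff_of_nonneg fun v hv => by
    obtain ⟨h₁, h₂⟩ := hpos v (mem_filter.mp hv).2
    exact mul_nonneg (sub_nonneg.mpr h₁) (sub_nonneg.mpr h₂)]
  refine forall_congr' fun v => ?_
  simp only [mem_filter, mem_univ, true_and, mul_eq_zero, sub_eq_zero]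
  norm_cast

theorem uc_eq_one_or_dc_eq_one
    (h : ∀ v : α, ¬IsMax v → numUpperCovers v = 1 ∨ dc v = 1) (v : α) :
    uc v = 1 ∨ dc v = 1 := by
  induction v using WellFoundedGT.induction with
  | _ v ih =>
    by_cases hv : IsMax v
    · exact Or.inl (uc_of_isMax hv)
    by_cases hdc : dc v = 1
    · exact Or.inr hdc
    obtain ⟨w, hw⟩ := card_eq_one.mp ((h v hv).resolve_right hdc)
    have hvw : v ⋖ w := by simpa using hw.ge (mem_singleton_self w)
    have huc : uc v = uc w := by rw [uc_eq_sum hv, hw, sum_singleton]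
    have hdcw : dc w ≠ 1 := fun h' => hdc (by
      have := dc_le_dc_of_covBy hvw; have := one_le_dc v; omega)
    exact Or.inl (huc ▸ (ih w hvw.lt).resolve_right hdcw)

theorem forall_uc_eq_one_or_dc_eq_one_iff :
    (∀ v : α, uc v = 1 ∨ dc v = 1) ↔ ∀ v : α, ¬IsMax v → numUpperCovers v = 1 ∨ dc v = 1 := by
  refine ⟨fun h v hv => (h v).imp_left fun huc => ?_, uc_eq_one_or_dc_eq_one⟩
  have := numUpperCovers_le_uc hv
  have := one_le_numUpperCovers hv
  omega

end Fintype

theorem gap_zero_iff_crossing_zero (α : Type*) [Fintype α] [PartialOrder α] :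
    gap α = 0 ↔ ∀ v : α, crossingNumber v = 0 := by
  simp only [crossingNumber_eq_zero_iff, forall_uc_eq_one_or_dc_eq_one_iff, gap_eq_zero_iff]
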